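/- Fix a control u ∈ L¹([s,T];ℝᵐ) and two Borel probability measures π, π' on 𝒜. Then the averaged costs satisfy |J_{s,π}[u] − J_{s,π'}[u]| ≤ (T·L_ℓ^u + L_h^u) · C_x^u · T · e^{C_𝒜 T} · W₁(π, π'), where C_x^u := (|x₀| + ‖B‖₂‖u‖_{L¹}) e^{C_𝒜 T}, L_ℓ^u := ‖Q‖₂ C_x^u, L_h^u := ‖Q_f‖₂ C_x^u, and W₁ is the Wasserstein-1 distance on 𝒜 induced by the matrix 2-norm. -/

import Mathlib

open MeasureTheory Set Matrix Filter Topology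

noncomputable instance matMS {k l : ℕ} : MeasurableSpace (Matrix (Fin k) (Fin l) ℝ) := borel _
instance matBS {k l : ℕ} : BorelSpace (Matrix (Fin k) (Fin l) ℝ) := ⟨rfl⟩

/-- The matrix 2-norm (operator norm w.r.t. Euclidean norms). -/
noncomputable def opN {k l : ℕ} (M : Matrix (Fin k) (Fin l) ℝ) : ℝ :=
  ‖LinearMap.toContinuousLinearMap (Matrix.toEuclideanLin M)‖

/-- Application of a matrix to a Euclidean vector. -/
noncomputable def app {k l : ℕ} (M : Matrix (Fin k) (Fin l) ℝ)
    (v : EuclideanSpace ℝ (Fin l)) : EuclideanSpace ℝ (Fin k) :=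
  Matrix.toEuclideanLin M v

/-- `x` is the solution on `[s,T]` of `ẋ = A x + B u`, `x(s) = x₀` (in integral form). -/
noncomputable def IsTraj {n m : ℕ} (B : Matrix (Fin n) (Fin m) ℝ) (s T : ℝ)
    (x₀ : EuclideanSpace ℝ (Fin n)) (A : Matrix (Fin n) (Fin n) ℝ)
    (u : ℝ → EuclideanSpace ℝ (Fin m)) (x : ℝ → EuclideanSpace ℝ (Fin n)) : Prop :=
  ContinuousOn x (Set.Icc s T) ∧
  ∀ t ∈ Set.Icc s T, x t = x₀ + ∫ τ in s..t, (app A (x τ) + app B (u τ))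

/-- The LQ cost `½∫ₛᵀ (xᵀQx + uᵀRu) dt + ½ x(T)ᵀ Q_f x(T)` of a trajectory/control pair. -/
noncomputable def cost {n m : ℕ} (Q Qf : Matrix (Fin n) (Fin n) ℝ) (R : Matrix (Fin m) (Fin m) ℝ)
    (s T : ℝ) (x : ℝ → EuclideanSpace ℝ (Fin n)) (u : ℝ → EuclideanSpace ℝ (Fin m)) : ℝ :=
  (1/2) * (∫ t in s..T, ((inner ℝ (x t) (app Q (x t)) : ℝ) + (inner ℝ (u t) (app R (u t)) : ℝ)))
    + (1/2) * (inner ℝ (x T) (app Qf (x T)) : ℝ)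

/-- An admissible process for the averaged problem: an integrable (and square-integrable)
control together with the corresponding family of trajectories, one for each `A ∈ 𝒜`. -/
noncomputable def Adm {n m : ℕ} (B : Matrix (Fin n) (Fin m) ℝ)
    (𝒜 : Set (Matrix (Fin n) (Fin n) ℝ)) (s T : ℝ) (x₀ : EuclideanSpace ℝ (Fin n))
    (u : ℝ → EuclideanSpace ℝ (Fin m))
    (x : Matrix (Fin n) (Fin n) ℝ → ℝ → EuclideanSpace ℝ (Fin n)) : Prop :=
  MeasureTheory.IntegrableOn u (Set.Icc s T) ∧
  MeasureTheory.IntegrableOn (fun t => ‖u t‖ ^ 2) (Set.Icc s T) ∧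
  ∀ A ∈ 𝒜, IsTraj B s T x₀ A u (x A)

/-- The averaged cost `J_{s,π}[u] = ∫_𝒜 cost(x_A, u) dπ(A)`. -/
noncomputable def Jcost {n m : ℕ} (Q Qf : Matrix (Fin n) (Fin n) ℝ)
    (R : Matrix (Fin m) (Fin m) ℝ) (s T : ℝ) (π : Measure (Matrix (Fin n) (Fin n) ℝ))
    (u : ℝ → EuclideanSpace ℝ (Fin m))
    (x : Matrix (Fin n) (Fin n) ℝ → ℝ → EuclideanSpace ℝ (Fin n)) : ℝ :=
  ∫ A, cost Q Qf R s T (x A) u ∂π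

/-- The value function `V_π(s,x₀)` of the averaged problem. -/
noncomputable def Val {n m : ℕ} (Q Qf : Matrix (Fin n) (Fin n) ℝ)
    (R : Matrix (Fin m) (Fin m) ℝ) (B : Matrix (Fin n) (Fin m) ℝ)
    (𝒜 : Set (Matrix (Fin n) (Fin n) ℝ)) (T : ℝ) (π : Measure (Matrix (Fin n) (Fin n) ℝ))
    (s : ℝ) (x₀ : EuclideanSpace ℝ (Fin n)) : ℝ :=
  sInf {c | ∃ u x, Adm B 𝒜 s T x₀ u x ∧ c = Jcost Q Qf R s T π u x}

/-- Wasserstein-1 distance between measures on the matrix space, induced by the 2-norm. -/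
noncomputable def W1 {k : ℕ} (π π' : Measure (Matrix (Fin k) (Fin k) ℝ)) : ℝ :=
  sInf {r | ∃ γ : Measure (Matrix (Fin k) (Fin k) ℝ × Matrix (Fin k) (Fin k) ℝ),
    γ.map Prod.fst = π ∧ γ.map Prod.snd = π' ∧ r = ∫ p, opN (p.1 - p.2) ∂γ}

/-- Support of a measure. -/
def msupport {α : Type*} [TopologicalSpace α] [MeasurableSpace α]
    (π : Measure α) : Set α :=
  {A | ∀ U : Set α, IsOpen U → A ∈ U → 0 < π U}

/-!
Each trajectory satisfies a linear Volterra equation, so the integral form of Grönwall's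
inequality bounds it by `C_x^u`, and bounds the gap `x_A - x_{A'}`, which solves the same equation
driven by `(A - A') x_{A'}`, by `C_x^u T e^{C_𝒜 T} ‖A - A'‖₂`. The quadratic cost is Lipschitz on
bounded sets, so `A ↦ cost(x_A, u)` is Lipschitz on `𝒜`. Integrating this Lipschitz bound against
any coupling of `π` and `π'` and taking the infimum over couplings gives the estimate.
-/

open scoped Matrix.Norms.L2Operator

lemma opN_eq_norm {k l : ℕ} (M : Matrix (Fin k) (Fin l) ℝ) : opN M = ‖M‖ := rfl

lemma norm_app_le {k l : ℕ} (M : Matrix (Fin k) (Fin l) ℝ) (v : EuclideanSpace ℝ (Fin l)) :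
    ‖app M v‖ ≤ ‖M‖ * ‖v‖ :=
  (LinearMap.toContinuousLinearMap (toEuclideanLin M)).le_opNorm v

lemma intervalIntegrable_of_mem_Icc {E : Type*} [NormedAddCommGroup E] {f : ℝ → E}
    {s T t : ℝ} (hf : IntegrableOn f (Icc s T)) (ht : t ∈ Icc s T) :
    IntervalIntegrable f volume s t :=
  (intervalIntegrable_iff_integrableOn_Icc_of_le ht.1).2 (hf.mono_set (Icc_subset_Icc_right ht.2))

theorem le_mul_exp_of_le_add_mul_integral {y : ℝ → ℝ} {a C s T : ℝ} (ha : 0 ≤ a) (hC : 0 ≤ C)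
    (hy : ContinuousOn y (Icc s T)) (hy₀ : ∀ t ∈ Icc s T, 0 ≤ y t)
    (h : ∀ t ∈ Icc s T, y t ≤ a + C * ∫ τ in s..t, y τ) :
    ∀ t ∈ Icc s T, y t ≤ a * Real.exp (C * (t - s)) := by
  intro t ht
  have hsT : s ≤ T := ht.1.trans ht.2
  set yc : ℝ → ℝ := fun τ => y (projIcc s T hsT τ)
  have hyc : Continuous yc :=
    hy.comp_continuous continuous_projIcc.subtype_val fun τ => (projIcc s T hsT τ).2
  have hyc_eq : EqOn yc y (Icc s T) := fun τ hτ => by simp [yc, projIcc_of_mem hsT hτ]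
  -- `φ = a + C ∫ y` satisfies `φ' = C y ≤ C φ`, so the differential Grönwall inequality applies.
  set φ : ℝ → ℝ := fun t => a + C * ∫ τ in s..t, yc τ
  have hφ : ∀ t, HasDerivAt φ (C * yc t) t := fun t =>
    ((hyc.integral_hasStrictDerivAt s t).hasDerivAt.const_mul C).const_add a
  have hyφ : ∀ t ∈ Icc s T, y t ≤ φ t := fun t ht => by
    have hint : ∫ τ in s..t, yc τ = ∫ τ in s..t, y τ := intervalIntegral.integral_congr
      (hyc_eq.mono (by rw [uIcc_of_le ht.1]; exact Icc_subset_Icc_right ht.2))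
    simpa only [φ, hint] using h t ht
  have hφ' : ∀ t ∈ Ico s T, ‖C * yc t‖ ≤ C * ‖φ t‖ + 0 := fun t ht => by
    have ht' := Ico_subset_Icc_self ht
    rw [hyc_eq ht', Real.norm_eq_abs, Real.norm_eq_abs, abs_of_nonneg (mul_nonneg hC (hy₀ t ht')),
      abs_of_nonneg ((hy₀ t ht').trans (hyφ t ht')), add_zero]
    exact mul_le_mul_of_nonneg_left (hyφ t ht') hC
  have hgronwall := norm_le_gronwallBound_of_norm_deriv_right_le (δ := a)
    (fun t _ => (hφ t).continuousAt.continuousWithinAt) (fun t _ => (hφ t).hasDerivWithinAt)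
    (by simp [φ, abs_of_nonneg ha]) hφ' t ht
  rw [gronwallBound_ε0] at hgronwall
  exact (hyφ t ht).trans ((le_abs_self _).trans hgronwall)

theorem norm_le_of_eq_add_integral {E : Type*} [NormedAddCommGroup E] [NormedSpace ℝ E]
    [CompleteSpace E] {L : E →L[ℝ] E} {z g : ℝ → E} {z₀ : E} {s T : ℝ}
    (hz : ContinuousOn z (Icc s T)) (hg : IntegrableOn g (Icc s T))
    (heq : ∀ t ∈ Icc s T, z t = z₀ + ∫ τ in s..t, (L (z τ) + g τ)) :
    ∀ t ∈ Icc s T, ‖z t‖ ≤ (‖z₀‖ + ∫ τ in s..T, ‖g τ‖) * Real.exp (‖L‖ * (t - s)) := by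
  intro t ht
  have hsT : s ≤ T := ht.1.trans ht.2
  have hLz : IntegrableOn (fun τ => L (z τ)) (Icc s T) :=
    (L.continuous.comp_continuousOn hz).integrableOn_compact isCompact_Icc
  have hnz : IntegrableOn (fun τ => ‖z τ‖) (Icc s T) :=
    hz.norm.integrableOn_compact isCompact_Icc
  refine le_mul_exp_of_le_add_mul_integral
    (add_nonneg (norm_nonneg _) (intervalIntegral.integral_nonneg hsT fun _ _ => norm_nonneg _))
    (norm_nonneg L) hz.norm (fun _ _ => norm_nonneg _) (fun t ht => ?_) t ht
  have hgt : ∫ τ in s..t, ‖g τ‖ ≤ ∫ τ in s..T, ‖g τ‖ :=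
    intervalIntegral.integral_mono_interval le_rfl ht.1 ht.2
      (Eventually.of_forall fun _ => norm_nonneg _)
      (intervalIntegrable_of_mem_Icc hg.norm ⟨hsT, le_rfl⟩)
  calc ‖z t‖ ≤ ‖z₀‖ + ∫ τ in s..t, ‖L (z τ) + g τ‖ := by
        rw [heq t ht]
        grw [norm_add_le, intervalIntegral.norm_integral_le_integral_norm ht.1]
    _ ≤ ‖z₀‖ + ∫ τ in s..t, (‖L‖ * ‖z τ‖ + ‖g τ‖) := by
        gcongr
        refine intervalIntegral.integral_mono_on ht.1
          (intervalIntegrable_of_mem_Icc (hLz.add hg).norm ht)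
          (intervalIntegrable_of_mem_Icc ((hnz.const_mul _).add hg.norm) ht) fun τ _ => ?_
        grw [norm_add_le, L.le_opNorm]
    _ = ‖z₀‖ + (∫ τ in s..t, ‖g τ‖) + ‖L‖ * ∫ τ in s..t, ‖z τ‖ := by
        rw [intervalIntegral.integral_add (intervalIntegrable_of_mem_Icc (hnz.const_mul _) ht)
          (intervalIntegrable_of_mem_Icc hg.norm ht), intervalIntegral.integral_const_mul]
        ring
    _ ≤ ‖z₀‖ + (∫ τ in s..T, ‖g τ‖) + ‖L‖ * ∫ τ in s..t, ‖z τ‖ := by linarith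

section Trajectory
variable {n m : ℕ} {B : Matrix (Fin n) (Fin m) ℝ} {s T : ℝ} {x₀ : EuclideanSpace ℝ (Fin n)}
  {A A' : Matrix (Fin n) (Fin n) ℝ} {u : ℝ → EuclideanSpace ℝ (Fin m)}
  {x x' : ℝ → EuclideanSpace ℝ (Fin n)}

lemma integrableOn_app_comp {k l : ℕ} (M : Matrix (Fin k) (Fin l) ℝ)
    {v : ℝ → EuclideanSpace ℝ (Fin l)} (hv : IntegrableOn v (Icc s T)) :
    IntegrableOn (fun τ => app M (v τ)) (Icc s T) :=
  (LinearMap.toContinuousLinearMap (toEuclideanLin M)).integrable_comp hv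

lemma IsTraj.norm_le (hx : IsTraj B s T x₀ A u x) (hu : IntegrableOn u (Icc s T)) :
    ∀ t ∈ Icc s T, ‖x t‖ ≤ (‖x₀‖ + ‖B‖ * ∫ τ in s..T, ‖u τ‖) * Real.exp (‖A‖ * (t - s)) := by
  intro t ht
  have hsT : s ≤ T := ht.1.trans ht.2
  have hBu : ∫ τ in s..T, ‖app B (u τ)‖ ≤ ‖B‖ * ∫ τ in s..T, ‖u τ‖ := by
    rw [← intervalIntegral.integral_const_mul]
    exact intervalIntegral.integral_mono_on hsT
      (intervalIntegrable_of_mem_Icc (integrableOn_app_comp B hu).norm ⟨hsT, le_rfl⟩)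
      (intervalIntegrable_of_mem_Icc (hu.norm.const_mul _) ⟨hsT, le_rfl⟩)
      fun τ _ => norm_app_le B (u τ)
  grw [norm_le_of_eq_add_integral (L := LinearMap.toContinuousLinearMap (toEuclideanLin A))
    hx.1 (integrableOn_app_comp B hu) hx.2 t ht, hBu]
  rfl

lemma IsTraj.norm_sub_le (hx : IsTraj B s T x₀ A u x) (hx' : IsTraj B s T x₀ A' u x')
    (hu : IntegrableOn u (Icc s T)) {K : ℝ} (hK : ∀ t ∈ Icc s T, ‖x' t‖ ≤ K) :
    ∀ t ∈ Icc s T, ‖x t - x' t‖ ≤ ‖A - A'‖ * K * (T - s) * Real.exp (‖A‖ * (t - s)) := by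
  intro t ht
  have hsT : s ≤ T := ht.1.trans ht.2
  have hx'I : IntegrableOn x' (Icc s T) := hx'.1.integrableOn_compact isCompact_Icc
  have hvf : ∀ {A₁ : Matrix (Fin n) (Fin n) ℝ} {x₁ : ℝ → EuclideanSpace ℝ (Fin n)},
      IsTraj B s T x₀ A₁ u x₁ → IntegrableOn (fun τ => app A₁ (x₁ τ) + app B (u τ)) (Icc s T) :=
    fun hx₁ => (integrableOn_app_comp _ (hx₁.1.integrableOn_compact isCompact_Icc)).add
      (integrableOn_app_comp B hu)
  have heq : ∀ t ∈ Icc s T, x t - x' t =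
      0 + ∫ τ in s..t, (app A (x τ - x' τ) + app (A - A') (x' τ)) := by
    intro t ht
    rw [hx.2 t ht, hx'.2 t ht, zero_add, add_sub_add_left_eq_sub,
      ← intervalIntegral.integral_sub (intervalIntegrable_of_mem_Icc (hvf hx) ht)
        (intervalIntegrable_of_mem_Icc (hvf hx') ht)]
    congr 1
    funext τ
    simp only [app, map_sub, LinearMap.sub_apply]
    abel
  have hforcing : ∫ τ in s..T, ‖app (A - A') (x' τ)‖ ≤ ‖A - A'‖ * K * (T - s) :=
    calc ∫ τ in s..T, ‖app (A - A') (x' τ)‖ ≤ ∫ τ in s..T, ‖A - A'‖ * K :=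
          intervalIntegral.integral_mono_on hsT
            (intervalIntegrable_of_mem_Icc (integrableOn_app_comp _ hx'I).norm ⟨hsT, le_rfl⟩)
            intervalIntegrable_const fun τ hτ =>
              (norm_app_le _ _).trans (mul_le_mul_of_nonneg_left (hK τ hτ) (norm_nonneg _))
      _ = ‖A - A'‖ * K * (T - s) := by
          rw [intervalIntegral.integral_const, smul_eq_mul]
          ring
  grw [norm_le_of_eq_add_integral (L := LinearMap.toContinuousLinearMap (toEuclideanLin A))
    (z := fun t => x t - x' t) (hx.1.sub hx'.1) (integrableOn_app_comp _ hx'I) heq t ht,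
    hforcing, norm_zero, zero_add]
  rfl

end Trajectory

lemma abs_inner_map_self_sub_le {E : Type*} [NormedAddCommGroup E] [InnerProductSpace ℝ E]
    (L : E →L[ℝ] E) (a b : E) :
    |inner ℝ a (L a) - inner ℝ b (L b)| ≤ ‖L‖ * (‖a‖ + ‖b‖) * ‖a - b‖ := by
  have hsplit : inner ℝ a (L a) - inner ℝ b (L b) =
      inner ℝ (a - b) (L a) + inner ℝ b (L (a - b)) := by
    rw [inner_sub_left, map_sub, inner_sub_right]
    ring
  rw [hsplit]
  calc |inner ℝ (a - b) (L a) + inner ℝ b (L (a - b))|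
      ≤ ‖a - b‖ * ‖L a‖ + ‖b‖ * ‖L (a - b)‖ := by
        grw [abs_add_le, abs_real_inner_le_norm, abs_real_inner_le_norm]
    _ ≤ ‖a - b‖ * (‖L‖ * ‖a‖) + ‖b‖ * (‖L‖ * ‖a - b‖) := by
        grw [L.le_opNorm a, L.le_opNorm (a - b)]
    _ = ‖L‖ * (‖a‖ + ‖b‖) * ‖a - b‖ := by ring

lemma abs_integral_add_sub_integral_add_le {f g r : ℝ → ℝ} {a b : ℝ} (hab : a ≤ b)
    (hf : IntervalIntegrable f volume a b) (hg : IntervalIntegrable g volume a b) :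
    |(∫ x in a..b, (f x + r x)) - ∫ x in a..b, (g x + r x)| ≤ ∫ x in a..b, |f x - g x| := by
  by_cases hr : IntervalIntegrable r volume a b
  · rw [intervalIntegral.integral_add hf hr, intervalIntegral.integral_add hg hr,
      add_sub_add_right_eq_sub, ← intervalIntegral.integral_sub hf hg]
    exact intervalIntegral.abs_integral_le_integral_abs hab
  · -- both integrands are non-integrable, so both integrals take the junk value `0`
    have hundef : ∀ {h : ℝ → ℝ}, IntervalIntegrable h volume a b →
        ∫ x in a..b, (h x + r x) = 0 := fun hh =>
      intervalIntegral.integral_undef fun hhr => hr (by simpa using hhr.sub hh)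
    rw [hundef hf, hundef hg, sub_self, abs_zero]
    exact intervalIntegral.integral_nonneg hab fun _ _ => abs_nonneg _

lemma abs_cost_sub_cost_le {n m : ℕ} {Q Qf : Matrix (Fin n) (Fin n) ℝ}
    {R : Matrix (Fin m) (Fin m) ℝ} {s T K D : ℝ} {xa xb : ℝ → EuclideanSpace ℝ (Fin n)}
    {u : ℝ → EuclideanSpace ℝ (Fin m)} (hsT : s ≤ T)
    (hxa : ContinuousOn xa (Icc s T)) (hxb : ContinuousOn xb (Icc s T))
    (hKa : ∀ t ∈ Icc s T, ‖xa t‖ ≤ K) (hKb : ∀ t ∈ Icc s T, ‖xb t‖ ≤ K)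
    (hD : ∀ t ∈ Icc s T, ‖xa t - xb t‖ ≤ D) :
    |cost Q Qf R s T xa u - cost Q Qf R s T xb u| ≤ ((T - s) * ‖Q‖ + ‖Qf‖) * K * D := by
  have hquad : ∀ M : Matrix (Fin n) (Fin n) ℝ, ∀ t ∈ Icc s T,
      |inner ℝ (xa t) (app M (xa t)) - inner ℝ (xb t) (app M (xb t))| ≤ 2 * ‖M‖ * K * D := by
    intro M t ht
    have hK : 0 ≤ K := (norm_nonneg _).trans (hKa t ht)
    calc _ ≤ ‖M‖ * (‖xa t‖ + ‖xb t‖) * ‖xa t - xb t‖ := abs_inner_map_self_sub_le _ _ _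
      _ ≤ ‖M‖ * (K + K) * D := by grw [hKa t ht, hKb t ht, hD t ht]
      _ = 2 * ‖M‖ * K * D := by ring
  have hqI : ∀ {y : ℝ → EuclideanSpace ℝ (Fin n)}, ContinuousOn y (Icc s T) →
      IntervalIntegrable (fun t => inner ℝ (y t) (app Q (y t))) volume s T := fun hy =>
    (hy.inner ((LinearMap.toContinuousLinearMap (toEuclideanLin Q)).continuous.comp_continuousOn
      hy)).intervalIntegrable_of_Icc hsT
  have hrunning : |(∫ t in s..T, (inner ℝ (xa t) (app Q (xa t)) + inner ℝ (u t) (app R (u t))))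
      - ∫ t in s..T, (inner ℝ (xb t) (app Q (xb t)) + inner ℝ (u t) (app R (u t)))|
      ≤ (T - s) * (2 * ‖Q‖ * K * D) := by
    grw [abs_integral_add_sub_integral_add_le hsT (hqI hxa) (hqI hxb),
      intervalIntegral.integral_mono_on hsT ((hqI hxa).sub (hqI hxb)).abs intervalIntegrable_const
        (hquad Q), intervalIntegral.integral_const, smul_eq_mul]
  have hterminal := hquad Qf T ⟨hsT, le_rfl⟩
  rw [abs_le] at hrunning hterminal ⊢
  unfold cost
  constructor <;> linarith

lemma exp_mul_sub_le_exp_mul {a C s t T : ℝ} (ha : 0 ≤ a) (haC : a ≤ C) (hs : 0 ≤ s)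
    (ht : t ∈ Icc s T) : Real.exp (a * (t - s)) ≤ Real.exp (C * T) :=
  Real.exp_le_exp.2 (mul_le_mul haC (by linarith [ht.2]) (by linarith [ht.1]) (ha.trans haC))

lemma abs_cost_sub_cost_le_of_isTraj {n m : ℕ} {B : Matrix (Fin n) (Fin m) ℝ} {s T C K : ℝ}
    {x₀ : EuclideanSpace ℝ (Fin n)} {A A' Q Qf : Matrix (Fin n) (Fin n) ℝ}
    {R : Matrix (Fin m) (Fin m) ℝ} {u : ℝ → EuclideanSpace ℝ (Fin m)}
    {x x' : ℝ → EuclideanSpace ℝ (Fin n)} (hs : 0 ≤ s) (hsT : s ≤ T) (hA : ‖A‖ ≤ C)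
    (hu : IntegrableOn u (Icc s T)) (hx : IsTraj B s T x₀ A u x) (hx' : IsTraj B s T x₀ A' u x')
    (hK : ∀ t ∈ Icc s T, ‖x t‖ ≤ K) (hK' : ∀ t ∈ Icc s T, ‖x' t‖ ≤ K) :
    |cost Q Qf R s T x u - cost Q Qf R s T x' u|
      ≤ (T * ‖Q‖ + ‖Qf‖) * K * (K * T * Real.exp (C * T) * ‖A - A'‖) := by
  have hK₀ : 0 ≤ K := (norm_nonneg _).trans (hK s ⟨le_rfl, hsT⟩)
  have hD : ∀ t ∈ Icc s T, ‖x t - x' t‖ ≤ K * T * Real.exp (C * T) * ‖A - A'‖ := by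
    intro t ht
    have hKT : 0 ≤ ‖A - A'‖ * K * (T - s) := by
      have := sub_nonneg.2 hsT
      positivity
    grw [hx.norm_sub_le hx' hu hK' t ht, exp_mul_sub_le_exp_mul (norm_nonneg A) hA hs ht,
      sub_le_self T hs]
    exact le_of_eq (by ring)
  have hD₀ : 0 ≤ K * T * Real.exp (C * T) * ‖A - A'‖ :=
    mul_nonneg (mul_nonneg (mul_nonneg hK₀ (hs.trans hsT)) (Real.exp_pos _).le) (norm_nonneg _)
  grw [abs_cost_sub_cost_le hsT hx.1 hx'.1 hK hK' hD, sub_le_self T hs]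

lemma LipschitzOnWith.integrable {X : Type*} [PseudoMetricSpace X] [MeasurableSpace X]
    [OpensMeasurableSpace X] {μ : Measure X} [IsFiniteMeasure μ] {S : Set X} {f : X → ℝ}
    {K : NNReal} (hf : LipschitzOnWith K f S) (hS : Bornology.IsBounded S)
    (hμS : ∀ᵐ x ∂μ, x ∈ S) : Integrable f μ := by
  -- `f` need not be measurable; its McShane extension `g` is continuous and `f =ᵐ[μ] g`.
  obtain ⟨g, hg, hfg⟩ := hf.extend_real
  obtain ⟨C, hC⟩ := isBounded_iff_forall_norm_le.1 (hg.isBounded_image hS)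
  have hfg_ae : f =ᵐ[μ] g := hμS.mono fun x hx => hfg hx
  refine (Integrable.of_bound hg.continuous.aestronglyMeasurable C ?_).congr hfg_ae.symm
  exact hμS.mono fun x hx => hC _ (mem_image_of_mem g hx)

lemma abs_integral_map_fst_sub_integral_map_snd_le {X : Type*} [MeasurableSpace X]
    {γ : Measure (X × X)} {f : X → ℝ} {c : X × X → ℝ} {L : ℝ}
    (hf₁ : Integrable f (γ.map Prod.fst)) (hf₂ : Integrable f (γ.map Prod.snd))
    (hc : Integrable c γ) (h : ∀ᵐ p ∂γ, |f p.1 - f p.2| ≤ L * c p) :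
    |∫ x, f x ∂(γ.map Prod.fst) - ∫ x, f x ∂(γ.map Prod.snd)| ≤ L * ∫ p, c p ∂γ := by
  have hf₁' : Integrable (fun p => f p.1) γ := hf₁.comp_measurable measurable_fst
  have hf₂' : Integrable (fun p => f p.2) γ := hf₂.comp_measurable measurable_snd
  rw [integral_map measurable_fst.aemeasurable hf₁.1,
    integral_map measurable_snd.aemeasurable hf₂.1, ← integral_sub hf₁' hf₂',
    ← integral_const_mul]
  exact abs_integral_le_integral_abs.trans
    (integral_mono_ae (hf₁'.sub hf₂').abs (hc.const_mul L) h)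

lemma le_mul_W1 {k : ℕ} {π π' : Measure (Matrix (Fin k) (Fin k) ℝ)} [IsProbabilityMeasure π]
    [IsProbabilityMeasure π'] {a L : ℝ} (hL : 0 ≤ L)
    (h : ∀ γ : Measure (Matrix (Fin k) (Fin k) ℝ × Matrix (Fin k) (Fin k) ℝ),
      γ.map Prod.fst = π → γ.map Prod.snd = π' → a ≤ L * ∫ p, opN (p.1 - p.2) ∂γ) :
    a ≤ L * W1 π π' := by
  rw [W1, ← smul_eq_mul, ← Real.sInf_smul_of_nonneg hL]
  refine le_csInf ⟨_, _, ⟨π.prod π', by simp, by simp, rfl⟩, rfl⟩ ?_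
  rintro _ ⟨_, ⟨γ, hγ₁, hγ₂, rfl⟩, rfl⟩
  exact h γ hγ₁ hγ₂

lemma abs_integral_sub_integral_le_mul_W1 {k : ℕ} {π π' : Measure (Matrix (Fin k) (Fin k) ℝ)}
    [IsProbabilityMeasure π] [IsProbabilityMeasure π'] {S : Set (Matrix (Fin k) (Fin k) ℝ)}
    {f : Matrix (Fin k) (Fin k) ℝ → ℝ} {L : ℝ} (hL : 0 ≤ L) (hS : Bornology.IsBounded S)
    (hπ : ∀ᵐ A ∂π, A ∈ S) (hπ' : ∀ᵐ A ∂π', A ∈ S)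
    (hf : ∀ A ∈ S, ∀ A' ∈ S, |f A - f A'| ≤ L * ‖A - A'‖) :
    |∫ A, f A ∂π - ∫ A, f A ∂π'| ≤ L * W1 π π' := by
  have hfS : LipschitzOnWith (Real.toNNReal L) f S :=
    LipschitzOnWith.of_dist_le' fun A hA A' hA' => by
      rw [Real.dist_eq, dist_eq_norm]
      exact hf A hA A' hA'
  have hdist : LipschitzWith 2 fun p : Matrix (Fin k) (Fin k) ℝ × Matrix (Fin k) (Fin k) ℝ =>
      ‖p.1 - p.2‖ :=
    (lipschitzWith_one_norm.comp (LipschitzWith.prod_fst.sub LipschitzWith.prod_snd)).weaken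
      (by norm_num)
  refine le_mul_W1 hL fun γ hγ₁ hγ₂ => ?_
  subst hγ₁ hγ₂
  have : IsProbabilityMeasure γ := Measure.isProbabilityMeasure_of_map Prod.fst
  have hS₂ : ∀ᵐ p ∂γ, p ∈ S ×ˢ S :=
    (ae_of_ae_map measurable_fst.aemeasurable hπ).and
      (ae_of_ae_map measurable_snd.aemeasurable hπ')
  refine abs_integral_map_fst_sub_integral_map_snd_le (hfS.integrable hS hπ)
    (hfS.integrable hS hπ') ((hdist.lipschitzOnWith (s := S ×ˢ S)).integrable (hS.prod hS) hS₂) ?_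
  filter_upwards [hS₂] with p hp using hf _ hp.1 _ hp.2

theorem stmt_9_general {n m : ℕ} (T : ℝ) (s : ℝ) (hs : s ∈ Set.Icc 0 T)
    (x₀ : EuclideanSpace ℝ (Fin n)) (B : Matrix (Fin n) (Fin m) ℝ)
    (𝒜 : Set (Matrix (Fin n) (Fin n) ℝ))
    (C𝒜 : ℝ) (hC𝒜 : ∀ A ∈ 𝒜, opN A ≤ C𝒜)
    (Q Qf : Matrix (Fin n) (Fin n) ℝ) (R : Matrix (Fin m) (Fin m) ℝ)
    (u : ℝ → EuclideanSpace ℝ (Fin m)) (hu : IntegrableOn u (Set.Icc s T))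
    (x : Matrix (Fin n) (Fin n) ℝ → ℝ → EuclideanSpace ℝ (Fin n))
    (hx : ∀ A ∈ 𝒜, IsTraj B s T x₀ A u (x A))
    (π π' : Measure (Matrix (Fin n) (Fin n) ℝ))
    [IsProbabilityMeasure π] [IsProbabilityMeasure π']
    (hπ : π 𝒜ᶜ = 0) (hπ' : π' 𝒜ᶜ = 0)
    (Cxu Lell Lh : ℝ)
    (hCxu : Cxu = (‖x₀‖ + opN B * ∫ τ in s..T, ‖u τ‖) * Real.exp (C𝒜 * T))
    (hLell : Lell = opN Q * Cxu) (hLh : Lh = opN Qf * Cxu) :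
    |Jcost Q Qf R s T π u x - Jcost Q Qf R s T π' u x| ≤
      (T * Lell + Lh) * Cxu * T * Real.exp (C𝒜 * T) * W1 π π' := by
  obtain ⟨hs₀, hsT⟩ := hs
  have hx₀u : 0 ≤ ‖x₀‖ + ‖B‖ * ∫ τ in s..T, ‖u τ‖ := add_nonneg (norm_nonneg _)
    (mul_nonneg (norm_nonneg _) (intervalIntegral.integral_nonneg hsT fun _ _ => norm_nonneg _))
  have hCxu₀ : 0 ≤ Cxu := hCxu ▸ mul_nonneg hx₀u (Real.exp_pos _).le
  have hbound : ∀ A ∈ 𝒜, ∀ t ∈ Icc s T, ‖x A t‖ ≤ Cxu := fun A hA t ht => by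
    grw [(hx A hA).norm_le hu t ht, exp_mul_sub_le_exp_mul (norm_nonneg A) (hC𝒜 A hA) hs₀ ht,
      hCxu]
    rfl
  subst hLell hLh
  refine abs_integral_sub_integral_le_mul_W1 (S := 𝒜) ?_
    (isBounded_iff_forall_norm_le.2 ⟨C𝒜, hC𝒜⟩) (ae_iff.2 hπ) (ae_iff.2 hπ') fun A hA A' hA' => ?_
  · have hT₀ : 0 ≤ T := hs₀.trans hsT
    simp only [opN_eq_norm]
    positivity
  · grw [abs_cost_sub_cost_le_of_isTraj hs₀ hsT (hC𝒜 A hA) hu (hx A hA) (hx A' hA')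
      (hbound A hA) (hbound A' hA')]
    exact le_of_eq (by simp only [opN_eq_norm]; ring)

theorem stmt_9 {n m : ℕ} (T : ℝ) (hT : 0 < T) (s : ℝ) (hs : s ∈ Set.Icc 0 T)
    (x₀ : EuclideanSpace ℝ (Fin n)) (B : Matrix (Fin n) (Fin m) ℝ)
    (𝒜 : Set (Matrix (Fin n) (Fin n) ℝ)) (h𝒜 : IsCompact 𝒜)
    (C𝒜 : ℝ) (hC𝒜 : ∀ A ∈ 𝒜, opN A ≤ C𝒜)
    (Q Qf : Matrix (Fin n) (Fin n) ℝ) (R : Matrix (Fin m) (Fin m) ℝ)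
    (hQ : Q.PosSemidef) (hQf : Qf.PosSemidef) (hR : R.PosDef)
    (u : ℝ → EuclideanSpace ℝ (Fin m)) (hu : IntegrableOn u (Set.Icc s T))
    (x : Matrix (Fin n) (Fin n) ℝ → ℝ → EuclideanSpace ℝ (Fin n))
    (hx : ∀ A ∈ 𝒜, IsTraj B s T x₀ A u (x A))
    (π π' : Measure (Matrix (Fin n) (Fin n) ℝ))
    [IsProbabilityMeasure π] [IsProbabilityMeasure π']
    (hπ : π 𝒜ᶜ = 0) (hπ' : π' 𝒜ᶜ = 0)
    (Cxu Lell Lh : ℝ)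
    (hCxu : Cxu = (‖x₀‖ + opN B * ∫ τ in s..T, ‖u τ‖) * Real.exp (C𝒜 * T))
    (hLell : Lell = opN Q * Cxu) (hLh : Lh = opN Qf * Cxu) :
    |Jcost Q Qf R s T π u x - Jcost Q Qf R s T π' u x| ≤
      (T * Lell + Lh) * Cxu * T * Real.exp (C𝒜 * T) * W1 π π' :=
  stmt_9_general T s hs x₀ B 𝒜 C𝒜 hC𝒜 Q Qf R u hu x hx π π' hπ hπ' Cxu Lell Lh hCxu hLell hLh
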